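/- The variance of the number X of isolated super-vertices in G(N,K,p) is V(X) = E[X] + ∑_{i,j=1}^r k_i k_j (1-p)^{i(n-i)+j(n-j)} ((1-p)^{-ij} - 1) − ∑_{i=1}^r k_i (1-p)^{2i(n-i)-i²}. -/

import Mathlib

open MeasureTheory ProbabilityTheory Filter Real
open scoped ENNReal Classical

abbrev EdgeIdx (N : ℕ) := {q : Fin N × Fin N // q.1 < q.2}

/-- The law of the random graph `G(N,K,p)`: each potential edge between the `k`-th and
`l`-th super-vertices (of sizes `size k`, `size l`) is present independently with
probability `1-(1-p)^(size k * size l)`. -/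
noncomputable def graphMeasure (N : ℕ) (size : Fin N → ℕ) (p : ℝ) :
    Measure (EdgeIdx N → Bool) :=
  Measure.pi fun e =>
    (PMF.bernoulli (1 - (1 - ENNReal.ofReal p) ^ (size e.1.1 * size e.1.2)).toNNReal
      (by rw [← ENNReal.coe_le_coe, ENNReal.coe_toNNReal (ne_top_of_le_ne_top ENNReal.one_ne_top tsub_le_self)]
          exact tsub_le_self)).toMeasure

/-- Super-vertex `k` is isolated in the configuration `ω`. -/
def Isolated {N : ℕ} (ω : EdgeIdx N → Bool) (k : Fin N) : Prop :=
  ∀ e : EdgeIdx N, (e.1.1 = k ∨ e.1.2 = k) → ω e = false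

/-- The number of isolated super-vertices. -/
noncomputable def numIsolated {N : ℕ} (ω : EdgeIdx N → Bool) : ℕ :=
  (Finset.univ.filter fun k => Isolated ω k).card

/-- The simple graph on super-vertices determined by a configuration `ω`. -/
def toGraph {N : ℕ} (ω : EdgeIdx N → Bool) : SimpleGraph (Fin N) where
  Adj k l := ∃ e : EdgeIdx N, ω e = true ∧
    ((e.1.1 = k ∧ e.1.2 = l) ∨ (e.1.1 = l ∧ e.1.2 = k))
  symm := by
    constructor
    intro k l h
    obtain ⟨e, he, hkl⟩ := h
    exact ⟨e, he, hkl.symm⟩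
  loopless := by
    constructor
    intro k h
    obtain ⟨e, _, hkl⟩ := h
    have h2 := e.2
    rcases hkl with ⟨ha, hb⟩ | ⟨ha, hb⟩ <;> rw [ha, hb] at h2 <;> exact lt_irrefl _ h2

/-- The super-vertices of `A` form a connected component of the graph. -/
def IsComponentOn {N : ℕ} (ω : EdgeIdx N → Bool) (A : Finset (Fin N)) : Prop :=
  ((toGraph ω).induce (A : Set (Fin N))).Connected ∧
  ∀ e : EdgeIdx N, ((e.1.1 ∈ A ∧ e.1.2 ∉ A) ∨ (e.1.1 ∉ A ∧ e.1.2 ∈ A)) → ω e = false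


/-! The count `X` is the sum of the indicators of the events `A v = {v is isolated}`, so
`Var X = ∑_{v,w} P(A v ∩ A w) - (∑_v P(A v))²`. The event `A v` says that every edge at `v` is
absent; these edges carry total weight `∑_{u ≠ v} s_v s_u = s_v (n - s_v)`, whence
`P(A v) = (1-p)^(s_v (n - s_v))`. For `v ≠ w` the edges at `v` or `w` carry weight
`s_v (n - s_v) + s_w (n - s_w) - s_v s_w`, the edge `vw` lying at both. Grouping the vertices by
size turns the sums over vertices into the `k_i`-weighted sums over sizes. -/

lemma Fintype.sum_sum_eq_sum_sum_add_sum_diag_sub {ι M : Type*} [Fintype ι] [DecidableEq ι]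
    [AddCommGroup M] {f g : ι → ι → M} (h : ∀ i j, i ≠ j → f i j = g i j) :
    ∑ i, ∑ j, f i j = ∑ i, ∑ j, g i j + ∑ i, (f i i - g i i) := by
  rw [← sub_eq_iff_eq_add', ← Finset.sum_sub_distrib]
  refine Finset.sum_congr rfl fun i _ => ?_
  rw [← Finset.sum_sub_distrib]
  exact Fintype.sum_eq_single i fun j hj => sub_eq_zero.2 (h i j hj.symm)

lemma Nat.sum_erase_eq_sub {ι : Type*} [DecidableEq ι] {s : Finset ι} {a : ι} (f : ι → ℕ)
    (h : a ∈ s) : ∑ x ∈ s.erase a, f x = ∑ x ∈ s, f x - f a :=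
  Nat.eq_sub_of_add_eq (Finset.sum_erase_add _ _ h)

lemma variance_sum_indicator_one {Ω ι : Type*} [MeasurableSpace Ω] [Fintype ι]
    {μ : Measure Ω} [IsProbabilityMeasure μ] {A : ι → Set Ω} (hA : ∀ i, MeasurableSet (A i)) :
    variance (∑ i, (A i).indicator 1) μ =
      ∑ i, ∑ j, μ.real (A i ∩ A j) - (∑ i, μ.real (A i)) ^ 2 := by
  have hint {B : Set Ω} (hB : MeasurableSet B) : Integrable (B.indicator (1 : Ω → ℝ)) μ :=
    (integrable_const 1).indicator hB
  have hL2 : MemLp (∑ i, (A i).indicator (1 : Ω → ℝ)) 2 μ :=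
    memLp_finsetSum' _ fun i _ =>
      memLp_indicator_const 2 (hA i) 1 (Or.inr (measure_ne_top _ _))
  have hsq : (∑ i, (A i).indicator (1 : Ω → ℝ)) ^ 2 = ∑ i, ∑ j, (A i ∩ A j).indicator 1 := by
    simp only [sq, Finset.sum_mul_sum, Set.inter_indicator_one]
  rw [variance_eq_sub hL2, hsq]
  simp only [Finset.sum_apply]
  rw [integral_finsetSum _ fun i _ =>
      integrable_finsetSum _ fun j _ => hint ((hA i).inter (hA j)),
    integral_finsetSum _ fun i _ => hint (hA i)]
  simp only [integral_finsetSum _ fun j _ => hint ((hA _).inter (hA j)),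
    integral_indicator_one (hA _), integral_indicator_one ((hA _).inter (hA _))]

def incident {N : ℕ} (k : Fin N) : Finset (EdgeIdx N) := {e | e.1.1 = k ∨ e.1.2 = k}

lemma mem_incident {N : ℕ} {k : Fin N} {e : EdgeIdx N} :
    e ∈ incident k ↔ e.1.1 = k ∨ e.1.2 = k := by
  simp [incident]

def edgeBetween {N : ℕ} {k l : Fin N} (h : k ≠ l) : EdgeIdx N :=
  ⟨(min k l, max k l), min_lt_max.2 h⟩

section edgeBetween

variable {N : ℕ} {k l : Fin N} (h : k ≠ l)

lemma edgeBetween_mem_incident_left : edgeBetween h ∈ incident k := by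
  rcases le_total k l with hkl | hkl <;> simp [mem_incident, edgeBetween, hkl]

lemma edgeBetween_mem_incident_right : edgeBetween h ∈ incident l := by
  rcases le_total k l with hkl | hkl <;> simp [mem_incident, edgeBetween, hkl]

lemma mul_edgeBetween {R : Type*} [CommMonoid R] (w : Fin N → R) :
    w (edgeBetween h).1.1 * w (edgeBetween h).1.2 = w k * w l := by
  rcases le_total k l with hkl | hkl <;> simp [edgeBetween, hkl, mul_comm]

lemma eq_edgeBetween {e : EdgeIdx N} (hk : e ∈ incident k) (hl : e ∈ incident l) :
    e = edgeBetween h := by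
  have := e.2
  rw [mem_incident] at hk hl
  ext <;> simp only [edgeBetween, min_def, max_def] <;> split_ifs <;> omega

lemma incident_inter_incident : incident k ∩ incident l = {edgeBetween h} := by
  ext e
  simp only [Finset.mem_inter, Finset.mem_singleton]
  refine ⟨fun he => eq_edgeBetween h he.1 he.2, ?_⟩
  rintro rfl
  exact ⟨edgeBetween_mem_incident_left h, edgeBetween_mem_incident_right h⟩

end edgeBetween

section incidentWeight

variable {N : ℕ} {R : Type*} [CommSemiring R] (w : Fin N → R)

lemma sum_incident_mul (k : Fin N) :
    ∑ e ∈ incident k, w e.1.1 * w e.1.2 = w k * ∑ l ∈ Finset.univ.erase k, w l := by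
  rw [Finset.mul_sum]
  symm
  refine Finset.sum_bij (fun l hl => edgeBetween (Finset.ne_of_mem_erase hl).symm)
    (fun _ _ => edgeBetween_mem_incident_left _) ?_ ?_ fun _ _ => (mul_edgeBetween _ w).symm
  · intro l₁ _ l₂ _ h
    have h₁ := congrArg (fun e : EdgeIdx N => e.1.1) h
    have h₂ := congrArg (fun e : EdgeIdx N => e.1.2) h
    simp only [edgeBetween, min_def, max_def] at h₁ h₂
    split_ifs at h₁ h₂ <;> omega
  · intro e he
    set l := if e.1.1 = k then e.1.2 else e.1.1
    have hl : e ∈ incident l := by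
      simp only [l]; split_ifs <;> simp [mem_incident]
    have hkl : k ≠ l := by
      have := e.2; rw [mem_incident] at he; simp only [l]; split_ifs <;> omega
    exact ⟨l, Finset.mem_erase.2 ⟨hkl.symm, Finset.mem_univ _⟩, (eq_edgeBetween hkl he hl).symm⟩

lemma sum_incident_union_add_mul {k l : Fin N} (h : k ≠ l) :
    ∑ e ∈ incident k ∪ incident l, w e.1.1 * w e.1.2 + w k * w l =
      w k * ∑ i ∈ Finset.univ.erase k, w i + w l * ∑ i ∈ Finset.univ.erase l, w i := by
  rw [← sum_incident_mul, ← sum_incident_mul, ← Finset.sum_union_inter,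
    incident_inter_incident h, Finset.sum_singleton, mul_edgeBetween]

end incidentWeight

instance isProbabilityMeasure_graphMeasure {N : ℕ} (size : Fin N → ℕ) (p : ℝ) :
    IsProbabilityMeasure (graphMeasure N size p) := by
  unfold graphMeasure; infer_instance

lemma PMF.bernoulli_toMeasure_false {q : NNReal} (h : q ≤ 1) :
    (PMF.bernoulli q h).toMeasure {false} = 1 - q := by
  rw [PMF.toMeasure_apply_singleton _ _ (measurableSet_singleton _), PMF.bernoulli_apply,
    cond_false, ENNReal.coe_sub, ENNReal.coe_one]

section isolated

variable {N : ℕ} (size : Fin N → ℕ) {p : ℝ}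

lemma graphMeasure_forall_eq_false (hp0 : 0 ≤ p) (hp1 : p ≤ 1) (T : Finset (EdgeIdx N)) :
    graphMeasure N size p {ω | ∀ e ∈ T, ω e = false} =
      ENNReal.ofReal ((1 - p) ^ ∑ e ∈ T, size e.1.1 * size e.1.2) := by
  have hpi : {ω : EdgeIdx N → Bool | ∀ e ∈ T, ω e = false} =
      (T : Set (EdgeIdx N)).pi fun _ => {false} := by
    ext; simp
  have hq : 1 - ENNReal.ofReal p = ENNReal.ofReal (1 - p) := by
    rw [ENNReal.ofReal_sub _ hp0, ENNReal.ofReal_one]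
  have hedge (m : ℕ) :
      1 - ((1 - (1 - ENNReal.ofReal p) ^ m).toNNReal : ℝ≥0∞) = ENNReal.ofReal ((1 - p) ^ m) := by
    rw [ENNReal.coe_toNNReal (ENNReal.sub_ne_top ENNReal.one_ne_top),
      ENNReal.sub_sub_cancel ENNReal.one_ne_top (pow_le_one' tsub_le_self _), hq,
      ENNReal.ofReal_pow (by linarith)]
  rw [hpi, ← Set.pi_univ_ite, graphMeasure, Measure.pi_pi]
  simp only [apply_ite, measure_univ, Finset.mem_coe, Finset.prod_ite_mem, Finset.univ_inter,
    PMF.bernoulli_toMeasure_false, hedge]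
  rw [← ENNReal.ofReal_prod_of_nonneg fun e _ => pow_nonneg (by linarith) _,
    Finset.prod_pow_eq_pow_sum]

lemma setOf_isolated (v : Fin N) :
    {ω | Isolated ω v} = {ω | ∀ e ∈ incident v, ω e = false} := by
  ext; simp [Isolated, mem_incident]

lemma graphMeasure_real_isolated (hp0 : 0 ≤ p) (hp1 : p ≤ 1) (v : Fin N) :
    (graphMeasure N size p).real {ω | Isolated ω v} =
      (1 - p) ^ (size v * (∑ w, size w - size v)) := by
  rw [measureReal_def, setOf_isolated, graphMeasure_forall_eq_false size hp0 hp1,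
    sum_incident_mul, Nat.sum_erase_eq_sub _ (Finset.mem_univ _),
    ENNReal.toReal_ofReal (pow_nonneg (by linarith) _)]

lemma graphMeasure_real_isolated_inter_mul (hp0 : 0 ≤ p) (hp1 : p ≤ 1) {v w : Fin N}
    (h : v ≠ w) :
    (graphMeasure N size p).real ({ω | Isolated ω v} ∩ {ω | Isolated ω w}) *
        (1 - p) ^ (size v * size w) =
      (1 - p) ^ (size v * (∑ u, size u - size v)) *
        (1 - p) ^ (size w * (∑ u, size u - size w)) := by
  have hinter : {ω | Isolated ω v} ∩ {ω | Isolated ω w} =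
      {ω | ∀ e ∈ incident v ∪ incident w, ω e = false} := by
    ext ω
    simp only [setOf_isolated, Set.mem_inter_iff, Set.mem_ofPred_eq, Finset.mem_union]
    exact ⟨fun h e he => he.elim (h.1 e) (h.2 e),
      fun h => ⟨fun e he => h e (.inl he), fun e he => h e (.inr he)⟩⟩
  rw [measureReal_def, hinter, graphMeasure_forall_eq_false size hp0 hp1,
    ENNReal.toReal_ofReal (pow_nonneg (by linarith) _), ← pow_add,
    sum_incident_union_add_mul size h, Nat.sum_erase_eq_sub _ (Finset.mem_univ _),
    Nat.sum_erase_eq_sub _ (Finset.mem_univ _), pow_add]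

end isolated

lemma numIsolated_eq_sum_indicator {N : ℕ} (ω : EdgeIdx N → Bool) :
    (numIsolated ω : ℝ) = ∑ v, {ω | Isolated ω v}.indicator 1 ω := by
  simp only [numIsolated, Finset.card_filter, Nat.cast_sum, Nat.cast_ite, Nat.cast_one,
    Nat.cast_zero, Set.indicator_apply, Set.mem_ofPred_eq, Pi.one_apply]

lemma variance_numIsolated {N : ℕ} (size : Fin N → ℕ) {p : ℝ} (hp0 : 0 ≤ p) (hp1 : p < 1)
    {n : ℕ} (hn : ∑ v, size v = n) :
    variance (fun ω => (numIsolated ω : ℝ)) (graphMeasure N size p) =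
      ∑ v, (1 - p) ^ (size v * (n - size v))
      + ∑ v, ∑ w, (1 - p) ^ (size v * (n - size v) + size w * (n - size w)) *
          ((1 - p) ^ (-((size v * size w : ℕ) : ℤ)) - 1)
      - ∑ v, (1 - p) ^ ((2 * (size v * (n - size v)) : ℤ) - (size v : ℤ) ^ 2) := by
  have hq : 1 - p ≠ 0 := by linarith
  set A : Fin N → Set (EdgeIdx N → Bool) := fun v => {ω | Isolated ω v}
  set P : Fin N → ℝ := fun v => (1 - p) ^ (size v * (n - size v))
  set g : Fin N → Fin N → ℝ := fun v w =>
    P v * P w * (1 - p) ^ (-((size v * size w : ℕ) : ℤ))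
  have hX : (fun ω => (numIsolated ω : ℝ)) = ∑ v, (A v).indicator 1 := by
    ext ω; rw [numIsolated_eq_sum_indicator, Finset.sum_apply]
  have hP (v : Fin N) : (graphMeasure N size p).real (A v) = P v := by
    rw [graphMeasure_real_isolated size hp0 hp1.le, hn]
  have hoff (v w : Fin N) (h : v ≠ w) : (graphMeasure N size p).real (A v ∩ A w) = g v w := by
    simp only [g]
    rw [zpow_neg, zpow_natCast, eq_mul_inv_iff_mul_eq₀ (pow_ne_zero _ hq),
      graphMeasure_real_isolated_inter_mul size hp0 hp1.le h, hn]
  have hdiag (v : Fin N) :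
      g v v = (1 - p) ^ ((2 * (size v * (n - size v)) : ℤ) - (size v : ℤ) ^ 2) := by
    have hle : size v ≤ n :=
      hn ▸ Finset.single_le_sum (fun w _ => Nat.zero_le _) (Finset.mem_univ v)
    have hexp : 2 * ((size v : ℤ) * (n - size v)) - (size v : ℤ) ^ 2 =
        ((size v * (n - size v) + size v * (n - size v) : ℕ) : ℤ) +
          -((size v * size v : ℕ) : ℤ) := by
      push_cast [Nat.cast_sub hle]; ring
    rw [hexp, zpow_add₀ hq, zpow_natCast, pow_add]
  rw [hX, variance_sum_indicator_one fun v => (Set.to_countable _).measurableSet,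
    Fintype.sum_sum_eq_sum_sum_add_sum_diag_sub hoff]
  simp only [Set.inter_self, hP, hdiag, sq, Finset.sum_mul_sum, Finset.sum_sub_distrib, mul_sub,
    mul_one, pow_add, g]
  ring

/-- the variance of the number `X` of isolated super-vertices is
`V(X) = E[X] + ∑_{i,j=1}^r k_i k_j (1-p)^(i(n-i)+j(n-j)) ((1-p)^(-ij) - 1)
        − ∑_{i=1}^r k_i (1-p)^(2i(n-i)-i²)`. -/
theorem variance_isolated (N r : ℕ) (size : Fin N → ℕ) (p : ℝ) (hp0 : 0 < p) (hp1 : p < 1)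
    (hrange : ∀ v, size v ∈ Finset.Icc 1 r)
    (k : ℕ → ℕ) (hk : ∀ i, k i = (Finset.univ.filter fun v => size v = i).card)
    (n : ℕ) (hn : n = ∑ v, size v) :
    variance (fun ω => (numIsolated ω : ℝ)) (graphMeasure N size p) =
      (∑ i ∈ Finset.Icc 1 r, (k i : ℝ) * (1 - p) ^ (i * (n - i)))
      + (∑ i ∈ Finset.Icc 1 r, ∑ j ∈ Finset.Icc 1 r,
          (k i : ℝ) * (k j : ℝ) * (1 - p) ^ (i * (n - i) + j * (n - j)) *
            ((1 - p) ^ (-((i * j : ℕ) : ℤ)) - 1))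
      - ∑ i ∈ Finset.Icc 1 r,
          (k i : ℝ) * (1 - p) ^ ((2 * (i * (n - i)) : ℤ) - ((i : ℤ)) ^ 2) := by
  have hfiber (F : ℕ → ℝ) : ∑ v, F (size v) = ∑ i ∈ Finset.Icc 1 r, (k i : ℝ) * F i := by
    rw [← Finset.sum_fiberwise_of_maps_to' fun v _ => hrange v]
    simp only [Finset.sum_const, nsmul_eq_mul, hk]
  have hfiber₂ (G : ℕ → ℕ → ℝ) : ∑ v, ∑ w, G (size v) (size w) =
      ∑ i ∈ Finset.Icc 1 r, ∑ j ∈ Finset.Icc 1 r, (k i : ℝ) * k j * G i j := by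
    rw [hfiber fun i => ∑ w, G i (size w)]
    simp only [hfiber (G _), Finset.mul_sum, mul_assoc]
  rw [variance_numIsolated size hp0.le hp1 hn.symm, hfiber fun i => (1 - p) ^ (i * (n - i)),
    hfiber₂ fun i j =>
      (1 - p) ^ (i * (n - i) + j * (n - j)) * ((1 - p) ^ (-((i * j : ℕ) : ℤ)) - 1),
    hfiber fun i => (1 - p) ^ ((2 * (i * (n - i)) : ℤ) - (i : ℤ) ^ 2)]
  simp only [mul_assoc]
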